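/- arXiv:alg-geom/9402003 — 4 statements merged into one kernel-verified Lean document; each statement's English description precedes it below -/
import Mathlib

section
/- For all integers k ≥ 2 and g ≥ 1, the SL₂ Verlinde number V_k(g) = Σ_{j=1}^{k-1} (k / (2 sin²(jπ/k)))^{g-1} is an integer; that is, there exists n ∈ ℤ whose image in ℝ equals V_k(g). -/
open Finset

/-- The SL₂ Verlinde number `V_k(g) = Σ_{j=1}^{k-1} (k / (2 sin²(jπ/k)))^{g-1}`. -/
noncomputable def VerlindeSL2 (k g : ℤ) : ℝ :=
  ∑ j ∈ Finset.Icc (1 : ℤ) (k - 1),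
    ((k : ℝ) / (2 * Real.sin (j * Real.pi / k) ^ 2)) ^ (g - 1)

/-!
Put `ζ = e^{2πi/k}` and `P = Σ_{c<k} c(c-k) X^c ∈ ℤ[X]`. Since `c ↦ c(c-k)` has second
difference `2` and vanishes at `c = 0` and `c = k`, every `k`-th root of unity `w ≠ 1` satisfies
`(1-w)² P(w) = -2kw`, while `(1-ζ^j)² = -4 sin²(πj/k) ζ^j`. Hence `k / (2 sin²(πj/k)) = P(ζ^j)`
and `V_k(g) = Σ_{j=1}^{k-1} P^{g-1}(ζ^j)`. Summing a monomial `X^n` over all `k`-th roots of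
unity gives `k` or `0`, so the sum over `0 ≤ j < k` is an integer, and so is the term `P^{g-1}(1)`.
-/

open Polynomial

noncomputable def verlindePoly (k : ℕ) : ℤ[X] :=
  ∑ c ∈ range k, (c * (c - k) : ℤ[X]) * X ^ c

section CommRing

variable {R : Type*} [CommRing R]

theorem aeval_verlindePoly (x : R) (k : ℕ) :
    aeval x (verlindePoly k) = ∑ c ∈ range k, (c : R) * (c - k) * x ^ c := by
  simp only [verlindePoly, map_sum, map_mul, map_sub, map_natCast, map_pow, aeval_X]

theorem one_sub_sq_mul_sum_range_natCast_mul_pow (x : R) (k : ℕ) :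
    (1 - x) ^ 2 * ∑ c ∈ range k, (c : R) * x ^ c = x - k * x ^ k + (k - 1) * x ^ (k + 1) := by
  induction k with
  | zero => simp
  | succ k ih =>
    rw [sum_range_succ, mul_add, ih]
    push_cast
    ring

theorem one_sub_pow_three_mul_aeval_verlindePoly (x : R) (k : ℕ) :
    (1 - x) ^ 3 * aeval x (verlindePoly k) =
      2 * (x ^ 2 - x ^ (k + 1)) - (k - 1) * x * (1 - x) * (1 + x ^ k) := by
  rw [aeval_verlindePoly]
  induction k with
  | zero => simp only [range_zero, sum_empty, mul_zero, Nat.cast_zero]; ring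
  | succ k ih =>
    have hsplit (c : ℕ) :
        (c : R) * (c - (k + 1 : ℕ)) * x ^ c = c * (c - k) * x ^ c - c * x ^ c := by
      push_cast; ring
    simp only [hsplit, sum_range_succ _ k, sum_sub_distrib]
    push_cast
    linear_combination ih - (1 - x) * one_sub_sq_mul_sum_range_natCast_mul_pow x k

variable [IsDomain R]

theorem one_sub_sq_mul_aeval_verlindePoly {x : R} {k : ℕ} (hxk : x ^ k = 1) (hx : x ≠ 1) :
    (1 - x) ^ 2 * aeval x (verlindePoly k) = -2 * k * x := by
  have h := one_sub_pow_three_mul_aeval_verlindePoly x k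
  rw [pow_succ x k, hxk, one_mul] at h
  refine mul_left_cancel₀ (sub_ne_zero.2 hx.symm) ?_
  linear_combination h

theorem geom_sum_eq_zero_of_pow_eq_one {x : R} {k : ℕ} (hxk : x ^ k = 1) (hx : x ≠ 1) :
    ∑ j ∈ range k, x ^ j = 0 := by
  have h := geom_sum_mul x k
  rw [hxk, sub_self, mul_eq_zero] at h
  exact h.resolve_right (sub_ne_zero.2 hx)

theorem exists_int_sum_range_aeval_eq {ζ : R} {k : ℕ} (hζ : ζ ^ k = 1) (Q : ℤ[X]) :
    ∃ N : ℤ, ∑ j ∈ range k, aeval (ζ ^ j) Q = N := by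
  have hmonomial (n : ℕ) : ∃ N : ℤ, ∑ j ∈ range k, (ζ ^ j) ^ n = N := by
    simp_rw [← pow_mul, mul_comm _ n, pow_mul]
    by_cases h : ζ ^ n = 1
    · exact ⟨k, by simp [h]⟩
    · refine ⟨0, ?_⟩
      rw [geom_sum_eq_zero_of_pow_eq_one (by rw [pow_right_comm, hζ, one_pow]) h, Int.cast_zero]
  choose N hN using hmonomial
  refine ⟨∑ n ∈ range (Q.natDegree + 1), Q.coeff n * N n, ?_⟩
  simp_rw [aeval_eq_sum_range, sum_comm (s := range k), ← smul_sum, hN]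
  push_cast
  simp only [zsmul_eq_mul]

end CommRing

theorem one_sub_exp_two_mul_I_sq (x : ℂ) :
    (1 - Complex.exp (2 * x * Complex.I)) ^ 2 =
      -4 * Complex.sin x ^ 2 * Complex.exp (2 * x * Complex.I) := by
  set e := Complex.exp (x * Complex.I)
  set f := Complex.exp (-x * Complex.I)
  have he : Complex.exp (2 * x * Complex.I) = e ^ 2 := by
    rw [← Complex.exp_nat_mul]; ring_nf
  have hfe : f * e = 1 := by
    rw [← Complex.exp_add]; simp
  rw [he]
  -- `(1 - e²)² = e² (f - e)²` as `f = e⁻¹`, and `(f - e) i = 2 sin x`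
  linear_combination e ^ 2 * (2 * Complex.sin x + (f - e) * Complex.I) * Complex.two_sin x
    + e ^ 2 * (f - e) ^ 2 * Complex.I_sq - (1 + f * e - 2 * e ^ 2) * hfe

theorem aeval_verlindePoly_exp {k j : ℕ} (hj : 0 < j) (hjk : j < k) :
    aeval (Complex.exp (2 * Real.pi * Complex.I / k) ^ j) (verlindePoly k) =
      ((k / (2 * Real.sin (j * Real.pi / k) ^ 2) : ℝ) : ℂ) := by
  have hζ : IsPrimitiveRoot (Complex.exp (2 * Real.pi * Complex.I / k)) k :=
    Complex.isPrimitiveRoot_exp k (by omega)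
  have hj' : (0 : ℝ) < j := by exact_mod_cast hj
  have hjk' : (j : ℝ) < k := by exact_mod_cast hjk
  set θ : ℝ := j * Real.pi / k with hθ
  have hw : Complex.exp (2 * Real.pi * Complex.I / k) ^ j = Complex.exp (2 * θ * Complex.I) := by
    rw [← Complex.exp_nat_mul, hθ]; push_cast; ring_nf
  clear_value θ
  have hs : (Real.sin θ : ℂ) ≠ 0 := by
    rw [hθ, Complex.ofReal_ne_zero]
    refine (Real.sin_pos_of_pos_of_lt_pi
      (div_pos (mul_pos hj' Real.pi_pos) (hj'.trans hjk')) ?_).ne'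
    rw [div_lt_iff₀ (hj'.trans hjk'), mul_comm Real.pi]
    exact mul_lt_mul_of_pos_right hjk' Real.pi_pos
  have key := one_sub_sq_mul_aeval_verlindePoly (by rw [pow_right_comm, hζ.pow_eq_one, one_pow])
    (hζ.pow_ne_one_of_pos_of_lt hj.ne' hjk)
  rw [hw, one_sub_exp_two_mul_I_sq, ← Complex.ofReal_sin] at key
  rw [hw, Complex.ofReal_div, Complex.ofReal_mul, Complex.ofReal_pow, Complex.ofReal_natCast,
    Complex.ofReal_ofNat, eq_div_iff (by simpa using hs)]
  refine mul_right_cancel₀ (Complex.exp_ne_zero (2 * θ * Complex.I)) ?_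
  linear_combination (-1 / 2 : ℂ) * key

theorem ofReal_verlindeSL2 (n m : ℕ) :
    (VerlindeSL2 (n + 1) (m + 1) : ℂ) =
      ∑ i ∈ range n, aeval (Complex.exp (2 * Real.pi * Complex.I / (n + 1 : ℕ)) ^ (i + 1))
        (verlindePoly (n + 1) ^ m) := by
  rw [VerlindeSL2, Int.Icc_eq_finset_map, sum_map, Complex.ofReal_sum,
    show ((n + 1 : ℤ) - 1 + 1 - 1).toNat = n by omega]
  refine sum_congr rfl fun i hi => ?_
  rw [map_pow, aeval_verlindePoly_exp i.succ_pos (by simpa using hi)]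
  simp only [Function.Embedding.trans_apply, Nat.castEmbedding_apply, addLeftEmbedding_apply,
    add_sub_cancel_right, zpow_natCast]
  push_cast
  ring_nf

theorem verlindeSL2_integer (k g : ℤ) (hk : 2 ≤ k) (hg : 1 ≤ g) :
    ∃ n : ℤ, (n : ℝ) = VerlindeSL2 k g := by
  obtain ⟨n, rfl⟩ : ∃ n : ℕ, k = n + 1 := ⟨(k - 1).toNat, by omega⟩
  obtain ⟨m, rfl⟩ : ∃ m : ℕ, g = m + 1 := ⟨(g - 1).toNat, by omega⟩
  have hζ := Complex.isPrimitiveRoot_exp (n + 1) n.succ_ne_zero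
  obtain ⟨N, hN⟩ := exists_int_sum_range_aeval_eq hζ.pow_eq_one (verlindePoly (n + 1) ^ m)
  rw [sum_range_succ', pow_zero] at hN
  refine ⟨N - (verlindePoly (n + 1) ^ m).eval 1, Complex.ofReal_injective ?_⟩
  rw [ofReal_verlindeSL2, Complex.ofReal_intCast, Int.cast_sub, ← hN, aeval_def, eval₂_at_one]
  simp
end

section
/- For every integer g ≥ 2, the limit as k → ∞ (k ranging over integers ≥ 2) of V_k(g) / k^{3(g-1)} exists and equals ζ(2g-2) / (2^{g-2} · π^{2g-2}), where ζ(2g-2) = Σ_{n=1}^∞ n^{-(2g-2)}. -/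
open Finset Filter Topology

/-!
After division by `k ^ (3 (g - 1))` the `j`-th summand of `V_k(g)` becomes
`(2 (k sin (jπ/k))²)^{-(g-1)}`, which tends to `(2 π² j²)^{-(g-1)}` as `k → ∞`; by Jordan's
inequality `sin x ≥ 2x/π` on `[0, π/2]` it is at most `(8 j²)^{-(g-1)}` when `2j ≤ k`. The symmetry
`j ↦ k - j` folds the sum into two sums over `j ≤ k/2`, and Tannery's theorem (dominated
convergence for series) sends each of them to `ζ(2g-2) / (2π²)^{g-1}`.
-/

open Real

theorem tendsto_sum_range_of_dominated {α G : Type*} [NormedAddCommGroup G] [CompleteSpace G]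
    {l : Filter α} {F : α → ℕ → G} {f : ℕ → G} {bound : ℕ → ℝ} {m : α → ℕ}
    (hm : Tendsto m l atTop) (h_sum : Summable bound) (h_lim : ∀ j, Tendsto (F · j) l (𝓝 (f j)))
    (h_le : ∀ a, ∀ j < m a, ‖F a j‖ ≤ bound j) :
    Tendsto (fun a => ∑ j ∈ range (m a), F a j) l (𝓝 (∑' j, f j)) := by
  have h_tsum (a : α) : ∑' j, (if j < m a then F a j else 0) = ∑ j ∈ range (m a), F a j := by
    rw [tsum_eq_sum (s := range (m a)) fun j hj => if_neg (by simpa using hj)]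
    exact sum_congr rfl fun j hj => if_pos (mem_range.mp hj)
  refine (tendsto_tsum_of_dominated_convergence h_sum.abs (fun j => ?_) ?_).congr h_tsum
  · refine (h_lim j).congr' ?_
    filter_upwards [hm.eventually_gt_atTop j] with a hj
    rw [if_pos hj]
  · refine Eventually.of_forall fun a j => ?_
    split_ifs with hj
    · exact (h_le a j hj).trans (le_abs_self _)
    · simp

theorem sum_range_sub_one_eq_add_of_symm {M : Type*} [AddCommMonoid M] (u : ℕ → M) (N : ℕ)
    (hu : ∀ j ≤ N, u (N - j) = u j) :
    ∑ j ∈ range (N - 1), u (j + 1) =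
      ∑ j ∈ range (N / 2), u (j + 1) + ∑ j ∈ range ((N - 1) / 2), u (j + 1) := by
  have hN : N - 1 = N / 2 + (N - 1) / 2 := by omega
  conv_lhs => rw [hN, sum_range_add]
  rw [← sum_range_reflect (fun j => u (j + 1)) ((N - 1) / 2)]
  congr 1
  refine sum_congr rfl fun j hj => ?_
  rw [mem_range] at hj
  rw [← hu (N / 2 + j + 1) (by omega)]
  congr 1
  omega

theorem tendsto_mul_sin_div_natCast (y : ℝ) :
    Tendsto (fun N : ℕ => (N : ℝ) * sin (y / N)) atTop (𝓝 y) := by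
  have h : Tendsto (fun N : ℕ => y * sinc (y / N)) atTop (𝓝 (y * sinc 0)) :=
    tendsto_const_nhds.mul
      ((continuous_sinc.tendsto 0).comp (tendsto_const_div_atTop_nhds_zero_nat y))
  rw [sinc_zero, mul_one] at h
  refine h.congr' ?_
  filter_upwards [eventually_ne_atTop 0] with N hN
  rcases eq_or_ne y 0 with rfl | hy
  · simp
  · rw [sinc_of_ne_zero (by positivity)]
    field_simp

theorem div_two_mul_sq_div_pow_three (N s : ℝ) : N / (2 * s ^ 2) / N ^ 3 = (2 * (N * s) ^ 2)⁻¹ := by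
  rcases eq_or_ne N 0 with rfl | hN
  · simp
  rcases eq_or_ne s 0 with rfl | hs
  · simp
  field_simp

noncomputable def verlindeTerm (n : ℕ) (N x : ℝ) : ℝ :=
  ((2 * (N * sin (x * π / N)) ^ 2)⁻¹) ^ n

theorem verlindeTerm_nonneg (n : ℕ) (N x : ℝ) : 0 ≤ verlindeTerm n N x := by
  unfold verlindeTerm
  positivity

theorem verlindeTerm_sub (n : ℕ) {N : ℝ} (hN : N ≠ 0) (x : ℝ) :
    verlindeTerm n N (N - x) = verlindeTerm n N x := by
  unfold verlindeTerm
  rw [show (N - x) * π / N = π - x * π / N by field_simp, sin_pi_sub]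

theorem verlindeTerm_le (n : ℕ) {N x : ℝ} (hx : 0 < x) (hxN : 2 * x ≤ N) :
    verlindeTerm n N x ≤ ((8 * x ^ 2)⁻¹) ^ n := by
  have hN : 0 < N := by linarith
  have hjordan := mul_le_sin (x := x * π / N) (by positivity)
    (by rw [div_le_div_iff₀ hN two_pos]; nlinarith [pi_pos])
  have hsin : 2 * x ≤ N * sin (x * π / N) :=
    calc 2 * x = N * (2 / π * (x * π / N)) := by field_simp
      _ ≤ N * sin (x * π / N) := mul_le_mul_of_nonneg_left hjordan hN.le
  unfold verlindeTerm
  gcongr ?_ ^ n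
  exact inv_anti₀ (by positivity) (by nlinarith)

theorem tendsto_verlindeTerm (n : ℕ) {x : ℝ} (hx : x ≠ 0) :
    Tendsto (fun N : ℕ => verlindeTerm n N x) atTop (𝓝 (((2 * (x * π) ^ 2)⁻¹) ^ n)) := by
  have hlim := tendsto_mul_sin_div_natCast (x * π)
  exact (((hlim.pow 2).const_mul 2).inv₀ (by positivity)).pow n

theorem summable_inv_eight_mul_sq_pow {n : ℕ} (hn : n ≠ 0) :
    Summable fun j : ℕ => ((8 * ((j : ℝ) + 1) ^ 2)⁻¹) ^ n := by
  have h := (Real.summable_nat_pow_inv.mpr (by omega : 1 < 2 * n)).comp_injective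
    (add_left_injective 1)
  refine (h.mul_left ((8 : ℝ) ^ n)⁻¹).congr fun j => ?_
  rw [Function.comp_apply, Nat.cast_succ, inv_pow, mul_pow, ← pow_mul, mul_inv]

theorem tendsto_sum_verlindeTerm {n : ℕ} (hn : n ≠ 0) :
    Tendsto (fun N : ℕ => ∑ j ∈ range (N - 1), verlindeTerm n N (j + 1)) atTop
      (𝓝 (2 * ∑' j : ℕ, ((2 * (((j : ℝ) + 1) * π) ^ 2)⁻¹) ^ n)) := by
  have half (m : ℕ → ℕ) (hm : Tendsto m atTop atTop) (hmN : ∀ N, 2 * m N ≤ N) :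
      Tendsto (fun N : ℕ => ∑ j ∈ range (m N), verlindeTerm n N (j + 1)) atTop
        (𝓝 (∑' j : ℕ, ((2 * (((j : ℝ) + 1) * π) ^ 2)⁻¹) ^ n)) := by
    refine tendsto_sum_range_of_dominated hm (summable_inv_eight_mul_sq_pow hn)
      (fun j => tendsto_verlindeTerm n (by positivity)) fun N j hj => ?_
    rw [Real.norm_of_nonneg (verlindeTerm_nonneg _ _ _)]
    refine verlindeTerm_le n (by positivity) ?_
    exact_mod_cast (by have := hmN N; omega : 2 * (j + 1) ≤ N)
  rw [two_mul]
  refine ((half (· / 2) ?_ fun N => Nat.mul_div_le N 2).add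
    (half (fun N => (N - 1) / 2) ?_ fun N => ?_)).congr fun N => ?_
  · exact Nat.tendsto_div_const_atTop two_ne_zero
  · exact (Nat.tendsto_div_const_atTop two_ne_zero).comp (tendsto_sub_atTop_nat 1)
  · omega
  · have hsymm (j : ℕ) (hj : j ≤ N) : verlindeTerm n N (N - j : ℕ) = verlindeTerm n N j := by
      rcases eq_or_ne N 0 with rfl | hN
      · rw [Nat.le_zero.mp hj]
      · rw [Nat.cast_sub hj, verlindeTerm_sub n (by exact_mod_cast hN)]
    have hsplit := sum_range_sub_one_eq_add_of_symm (fun j => verlindeTerm n N j) N hsymm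
    push_cast at hsplit
    exact hsplit.symm

theorem two_mul_tsum_inv_two_mul_sq_pow (n : ℕ) :
    2 * ∑' j : ℕ, ((2 * (((j : ℝ) + 1) * π) ^ 2)⁻¹) ^ n =
      (∑' j : ℕ, ((j : ℝ) + 1) ^ (-(2 * n : ℤ))) / (2 ^ ((n : ℤ) - 1) * π ^ (2 * n : ℤ)) := by
  have hterm (j : ℕ) : ((2 * (((j : ℝ) + 1) * π) ^ 2)⁻¹) ^ n =
      ((2 * π ^ 2) ^ n)⁻¹ * ((j : ℝ) + 1) ^ (-(2 * n : ℤ)) := by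
    rw [zpow_neg, show (2 * n : ℤ) = (2 * n : ℕ) by push_cast; ring, zpow_natCast,
      pow_mul, ← inv_pow, ← inv_pow, ← mul_pow, ← mul_inv]
    ring
  rw [tsum_congr hterm, tsum_mul_left, zpow_sub_one₀ two_ne_zero,
    show (2 * n : ℤ) = (2 * n : ℕ) by push_cast; ring, zpow_natCast, zpow_natCast]
  field_simp
  ring

theorem verlindeSL2_div_zpow_eq_sum (n N : ℕ) :
    VerlindeSL2 N (n + 1) / (N : ℝ) ^ (3 * ((n : ℤ) + 1 - 1)) =
      ∑ j ∈ range (N - 1), verlindeTerm n N (j + 1) := by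
  rw [VerlindeSL2, Int.Icc_eq_finset_map, sum_map, sum_div,
    show ((N : ℤ) - 1 + 1 - 1).toNat = N - 1 by omega]
  refine sum_congr rfl fun j _ => ?_
  rw [add_sub_cancel_right, show (3 * n : ℤ) = (3 * n : ℕ) by push_cast; ring, zpow_natCast,
    zpow_natCast, pow_mul, ← div_pow, Int.cast_natCast, div_two_mul_sq_div_pow_three]
  simp [verlindeTerm, add_comm]

theorem verlindeSL2_asymptotics (g : ℤ) (hg : 2 ≤ g) :
    Tendsto (fun k : ℤ => VerlindeSL2 k g / (k : ℝ) ^ (3 * (g - 1))) atTop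
      (𝓝 ((∑' n : ℕ, ((n : ℝ) + 1) ^ (-(2 * g - 2))) /
        ((2 : ℝ) ^ (g - 2) * Real.pi ^ (2 * g - 2)))) := by
  obtain ⟨n, rfl⟩ : ∃ n : ℕ, g = n + 1 := ⟨(g - 1).toNat, by omega⟩
  rw [show 2 * ((n : ℤ) + 1) - 2 = 2 * n by ring, show (n : ℤ) + 1 - 2 = n - 1 by ring,
    ← two_mul_tsum_inv_two_mul_sq_pow]
  have htoNat : Tendsto Int.toNat atTop atTop :=
    tendsto_atTop_atTop.mpr fun N => ⟨N, fun k hk => by omega⟩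
  refine ((tendsto_sum_verlindeTerm (by omega)).comp htoNat).congr' ?_
  filter_upwards [eventually_ge_atTop 0] with k hk
  lift k to ℕ using hk
  rw [Function.comp_apply, Int.toNat_natCast, ← verlindeSL2_div_zpow_eq_sum, Int.cast_natCast]
end

section
/- For all integers g ≥ 2 and k ≥ 1, every c ∈ ℂ with |c| = 1, and every real R > 1: ∮_{|Y|=R} ((Y^k + Y^{-k})/(Y^k - Y^{-k})) · ((Y - Y^{-1})(cY - c^{-1}Y^{-1}))^{-2(g-1)} · Y^{-1} dY = 0. (All poles of the integrand lie on the unit circle, and the integrand decays fast enough at infinity that the sum of all its residues vanishes.) -/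
open Metric Filter Topology Bornology Set

/-! Away from the unit circle the integrand is holomorphic, so by Cauchy's theorem on annuli its
integral over `C(0, r)` does not depend on `r > 1`. As `Y → ∞` the first factor tends to `1` and
the second to `0` (its base grows like `Y²` and the exponent is negative), so `Y` times the
integrand tends to `0`, and the integral over a circle of radius `r` is `o(1)` as `r → ∞`. -/

theorem circleIntegral_eq_zero_of_differentiableOn_compl_ball_of_tendsto
    {E : Type*} [NormedAddCommGroup E] [NormedSpace ℂ E] [CompleteSpace E]
    {f : ℂ → E} {c : ℂ} {R : ℝ} (hR : 0 < R) (hd : DifferentiableOn ℂ f (ball c R)ᶜ)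
    (hf : Tendsto (fun z => (z - c) • f z) (cobounded ℂ) (𝓝 0)) :
    ∮ z in C(c, R), f z = 0 := by
  have h_const : ∀ r, R ≤ r → ∮ z in C(c, r), f z = ∮ z in C(c, R), f z := fun r hr =>
    Complex.circleIntegral_eq_of_differentiable_on_annulus_off_countable hR hr countable_empty
      (hd.continuousOn.mono fun z hz => hz.2)
      fun z hz => (hd.mono (compl_subset_compl.2 ball_subset_closedBall)).differentiableAt
        (isClosed_closedBall.isOpen_compl.mem_nhds hz.1.2)
  refine norm_le_zero_iff.1 (le_of_forall_pos_le_add fun ε hε => ?_)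
  obtain ⟨M, -, hM⟩ := hasBasis_cobounded_norm.eventually_iff.1
    (hf.eventually (closedBall_mem_nhds 0 (div_pos hε Real.two_pi_pos)))
  set r := max R (M + ‖c‖)
  have hr : 0 < r := hR.trans_le (le_max_left _ _)
  have h_bound : ∀ z ∈ sphere c r, ‖f z‖ ≤ ε / (2 * Real.pi) / r := fun z hz => by
    have hzc : ‖z - c‖ = r := by simpa [dist_eq_norm] using hz
    have hMz : M ≤ ‖z‖ := by
      linarith [norm_sub_le z c, le_max_right R (M + ‖c‖)]
    have := hM hMz
    rw [dist_zero_right, norm_smul, hzc] at this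
    rwa [le_div_iff₀ hr, mul_comm]
  calc ‖∮ z in C(c, R), f z‖ = ‖∮ z in C(c, r), f z‖ := by rw [h_const r (le_max_left _ _)]
    _ ≤ 2 * Real.pi * r * (ε / (2 * Real.pi) / r) :=
      circleIntegral.norm_integral_le_of_norm_le_const hr.le h_bound
    _ = 0 + ε := by field_simp; ring

lemma norm_sub_norm_inv_le_norm_mul_sub {c : ℂ} (hc : ‖c‖ = 1) (z : ℂ) :
    ‖z‖ - ‖z‖⁻¹ ≤ ‖c * z - c⁻¹ * z⁻¹‖ := by
  simpa [hc] using norm_sub_norm_le (c * z) (c⁻¹ * z⁻¹)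

lemma mul_sub_inv_mul_inv_ne_zero {c z : ℂ} (hc : ‖c‖ = 1) (hz : 1 < ‖z‖) :
    c * z - c⁻¹ * z⁻¹ ≠ 0 := by
  have : 0 < ‖z‖ - ‖z‖⁻¹ := sub_pos.2 ((inv_lt_one_of_one_lt₀ hz).trans hz)
  exact norm_pos_iff.1 (this.trans_le (norm_sub_norm_inv_le_norm_mul_sub hc z))

lemma tendsto_norm_sub_inv_mul_mul_sub_inv_cobounded {c : ℂ} (hc : ‖c‖ = 1) :
    Tendsto (fun z : ℂ => ‖(z - z⁻¹) * (c * z - c⁻¹ * z⁻¹)‖) (cobounded ℂ) atTop := by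
  have h : Tendsto (fun z : ℂ => ‖z‖ - ‖z‖⁻¹) (cobounded ℂ) atTop := by
    simpa [sub_eq_add_neg] using tendsto_norm_cobounded_atTop.atTop_add
      (tendsto_inv_atTop_zero.comp tendsto_norm_cobounded_atTop).neg
  refine tendsto_atTop_mono' _ ?_ (h.atTop_mul_atTop₀ h)
  filter_upwards [eventually_cobounded_le_norm 1] with z hz
  have h0 : 0 ≤ ‖z‖ - ‖z‖⁻¹ := sub_nonneg.2 ((inv_le_one_of_one_le₀ hz).trans hz)
  rw [norm_mul]
  exact mul_le_mul (by simpa using norm_sub_norm_inv_le_norm_mul_sub (c := 1) (by simp) z)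
    (norm_sub_norm_inv_le_norm_mul_sub hc z) h0 (norm_nonneg _)

lemma tendsto_zpow_add_div_zpow_sub_cobounded {k : ℤ} (hk : 0 < k) :
    Tendsto (fun z : ℂ => (z ^ k + z ^ (-k)) / (z ^ k - z ^ (-k))) (cobounded ℂ) (𝓝 1) := by
  have hw : Tendsto (fun z : ℂ => z ^ (-k)) (cobounded ℂ) (𝓝 0) := by
    rw [tendsto_zero_iff_norm_tendsto_zero]
    exact ((tendsto_zpow_atTop_zero (neg_neg_of_pos hk)).comp tendsto_norm_cobounded_atTop).congr
      fun z => (norm_zpow z (-k)).symm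
  have hlim : Tendsto (fun w : ℂ => (1 + w ^ 2) / (1 - w ^ 2)) (𝓝 0) (𝓝 1) := by
    have : ContinuousAt (fun w : ℂ => (1 + w ^ 2) / (1 - w ^ 2)) 0 := by
      fun_prop (disch := norm_num)
    simpa using this.tendsto
  refine (hlim.comp hw).congr' ?_
  filter_upwards [eventually_ne_cobounded 0] with z hz
  have hzk : z ^ k ≠ 0 := zpow_ne_zero k hz
  simp only [Function.comp, zpow_neg]
  field_simp

noncomputable def verlindeIntegrand (g k : ℤ) (c : ℂ) (Y : ℂ) : ℂ :=
  ((Y ^ k + Y ^ (-k)) / (Y ^ k - Y ^ (-k))) *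
    ((Y - Y⁻¹) * (c * Y - c⁻¹ * Y⁻¹)) ^ (-2 * (g - 1)) * Y⁻¹

lemma differentiableAt_verlindeIntegrand (g : ℤ) {k : ℤ} (hk : 1 ≤ k) {c z : ℂ} (hc : ‖c‖ = 1)
    (hz : 1 < ‖z‖) : DifferentiableAt ℂ (verlindeIntegrand g k c) z := by
  have hz0 : z ≠ 0 := norm_pos_iff.1 (one_pos.trans hz)
  have hzk : 1 < ‖z ^ k‖ := by rw [norm_zpow]; exact one_lt_zpow₀ hz (by omega)
  have hden : z ^ k - z ^ (-k) ≠ 0 := by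
    simpa [zpow_neg] using mul_sub_inv_mul_inv_ne_zero (c := 1) (by simp) hzk
  have hbase : (z - z⁻¹) * (c * z - c⁻¹ * z⁻¹) ≠ 0 :=
    mul_ne_zero (by simpa using mul_sub_inv_mul_inv_ne_zero (c := 1) (by simp) hz)
      (mul_sub_inv_mul_inv_ne_zero hc hz)
  unfold verlindeIntegrand
  fun_prop (disch := simp [*])

lemma tendsto_mul_verlindeIntegrand_cobounded {g k : ℤ} (hg : 2 ≤ g) (hk : 1 ≤ k) {c : ℂ}
    (hc : ‖c‖ = 1) : Tendsto (fun z => z * verlindeIntegrand g k c z) (cobounded ℂ) (𝓝 0) := by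
  have hbase : Tendsto (fun z : ℂ => ((z - z⁻¹) * (c * z - c⁻¹ * z⁻¹)) ^ (-2 * (g - 1)))
      (cobounded ℂ) (𝓝 0) := by
    rw [tendsto_zero_iff_norm_tendsto_zero]
    simp_rw [norm_zpow]
    exact (tendsto_zpow_atTop_zero (by omega)).comp
      (tendsto_norm_sub_inv_mul_mul_sub_inv_cobounded hc)
  have := (tendsto_zpow_add_div_zpow_sub_cobounded (by omega : 0 < k)).mul hbase
  rw [mul_zero] at this
  refine this.congr' ?_
  filter_upwards [eventually_ne_cobounded 0] with z hz
  simp only [verlindeIntegrand]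
  field_simp

theorem verlindeSL3_column_sum_vanishes (g k : ℤ) (hg : 2 ≤ g) (hk : 1 ≤ k)
    (c : ℂ) (hc : ‖c‖ = 1) (R : ℝ) (hR : 1 < R) :
    (∮ Y in C(0, R),
        ((Y ^ k + Y ^ (-k)) / (Y ^ k - Y ^ (-k))) *
          ((Y - Y⁻¹) * (c * Y - c⁻¹ * Y⁻¹)) ^ (-2 * (g - 1)) * Y⁻¹) = 0 := by
  refine circleIntegral_eq_zero_of_differentiableOn_compl_ball_of_tendsto
    (f := verlindeIntegrand g k c) (by linarith) (fun z hz => ?_)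
    (by simpa using tendsto_mul_verlindeIntegrand_cobounded hg hk hc)
  have hz' : 1 < ‖z‖ := by simpa using hR.trans_le (not_lt.1 hz)
  exact (differentiableAt_verlindeIntegrand g hk hc hz').differentiableWithinAt
end

section
/- Let k ≥ 1 be an integer. (a) For every ζ ∈ ℂ with ζ^{2k} = 1 and every real r with 0 < r < 1 and r < 2 sin(π/(2k)): (2πi)^{-1} · ∮_{|z-ζ|=r} (k/z) · ((z^k + z^{-k})/(z^k - z^{-k})) dz = 1. (b) For every real r with 0 < r < 1: (2πi)^{-1} · ∮_{|z|=r} (k/z) · ((z^k + z^{-k})/(z^k - z^{-k})) dz = -k. -/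
open Complex Metric Set
open scoped Real

/-!
The density is the logarithmic derivative of `g z = z ^ (-k) * (z ^ (2 * k) - 1)`:
`(k / z) * (z ^ k + z ^ (-k)) / (z ^ k - z ^ (-k)) = (z ^ (2k) - 1)' / (z ^ (2k) - 1) - k / z`.
Hence its residues are the orders of `g`: `1` at each `2k`-th root of unity, a simple zero of
`z ^ (2k) - 1`, and `-k` at the pole `0`. A disc of radius `r < 1` about a root `ζ` misses `0`,
and for `r < 2 sin (π / 2k)`, the distance between neighbouring roots, it contains no other root;
a disc of radius `r < 1` about `0` contains no root at all.
-/

section LogDeriv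

variable {p : ℂ → ℂ} {c : ℂ} {R : ℝ}

theorem circleIntegral_deriv_div_eq_zero (hp : Differentiable ℂ p) (hR : 0 ≤ R)
    (hne : ∀ z ∈ closedBall c R, p z ≠ 0) : ∮ z in C(c, R), deriv p z / p z = 0 :=
  ((hp.deriv.differentiableOn.div hp.differentiableOn hne).mono
    closure_ball_subset_closedBall).diffContOnCl.circleIntegral_eq_zero hR

theorem circleIntegral_deriv_div_eq_two_pi_I (hp : Differentiable ℂ p) (hR : 0 < R)
    (hpc : p c = 0) (hp'c : deriv p c ≠ 0)
    (hne : ∀ z ∈ closedBall c R, z ≠ c → p z ≠ 0) :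
    ∮ z in C(c, R), deriv p z / p z = 2 * π * I := by
  have hfactor : ∀ z, p z = (z - c) * dslope p c z := fun z =>
    (sub_smul_dslope_of_zero hpc z).symm
  have hq : ∀ z ∈ closedBall c R, dslope p c z ≠ 0 := by
    intro z hz hq
    rcases eq_or_ne z c with rfl | hzc
    · exact hp'c (by rwa [dslope_same] at hq)
    · exact hne z hz hzc (by rw [hfactor, hq, mul_zero])
  have hqd : DifferentiableOn ℂ (dslope p c) (closedBall c R) :=
    (differentiableOn_dslope (closedBall_mem_nhds c hR)).2 hp.differentiableOn
  calc ∮ z in C(c, R), deriv p z / p z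
      = ∮ z in C(c, R), (z - c)⁻¹ • (deriv p z / dslope p c z) := by
        refine circleIntegral.integral_congr hR.le fun z _ => ?_
        rw [hfactor, smul_eq_mul, mul_comm (z - c), ← div_div, div_eq_inv_mul]
    _ = (2 * π * I) • (deriv p c / dslope p c c) :=
        (hp.deriv.differentiableOn.div hqd hq).circleIntegral_sub_inv_smul (mem_ball_self hR)
    _ = 2 * π * I := by rw [dslope_same, div_self hp'c, smul_eq_mul, mul_one]

end LogDeriv

theorem circleIntegral_sub_inv_eq_zero {c w : ℂ} {R : ℝ} (hR : 0 ≤ R)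
    (hw : w ∉ closedBall c R) : ∮ z in C(c, R), (z - w)⁻¹ = 0 := by
  have hd : DifferentiableOn ℂ (fun z => (z - w)⁻¹) (closedBall c R) :=
    ((differentiable_id.sub_const w).differentiableOn).inv fun z hz h =>
      hw (sub_eq_zero.1 h ▸ hz)
  exact (hd.mono closure_ball_subset_closedBall).diffContOnCl.circleIntegral_eq_zero hR

theorem sin_pi_div_le_sin_pi_mul_div {n j : ℕ} (hj : 0 < j) (hjn : j < n) :
    Real.sin (π / n) ≤ Real.sin (π * j / n) := by
  have hn : (0 : ℝ) < n := by exact_mod_cast hj.trans hjn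
  have hj1 : (1 : ℝ) ≤ j := by exact_mod_cast hj
  have hjn1 : (j : ℝ) + 1 ≤ n := by exact_mod_cast hjn
  have hπn : π / n ≤ π := div_le_self Real.pi_pos.le (by linarith)
  have hmem : π * j / n ∈ Icc (π / n) (π - π / n) := by
    constructor
    · gcongr; exact le_mul_of_one_le_right Real.pi_pos.le hj1
    · rw [le_sub_iff_add_le, ← add_div, div_le_iff₀ hn]; nlinarith [Real.pi_pos]
  have hmin := strictConcaveOn_sin_Icc.concaveOn.min_le_of_mem_Icc
    ⟨by positivity, hπn⟩ ⟨by linarith, by linarith [div_nonneg Real.pi_pos.le hn.le]⟩ hmem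
  rwa [Real.sin_pi_sub, min_self] at hmin

theorem two_mul_sin_pi_div_le_norm_sub {n : ℕ} {z ζ : ℂ} (hz : z ^ n = 1) (hζ : ζ ^ n = 1)
    (hne : z ≠ ζ) : 2 * Real.sin (π / n) ≤ ‖z - ζ‖ := by
  rcases Nat.eq_zero_or_pos n with rfl | hn
  · simp -- `π / 0 = 0`
  have : NeZero n := ⟨hn.ne'⟩
  have hζ0 : ζ ≠ 0 := by rintro rfl; simp [zero_pow hn.ne'] at hζ
  obtain ⟨j, hjn, hj⟩ := (isPrimitiveRoot_exp n hn.ne').eq_pow_of_pow_eq_one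
    (ξ := z / ζ) (by rw [div_pow, hz, hζ, div_one])
  have hj0 : 0 < j := by
    refine Nat.pos_of_ne_zero fun h => hne ?_
    rwa [h, pow_zero, eq_comm, div_eq_one_iff_eq hζ0] at hj
  have hsub : z - ζ = ζ * (exp (I * ↑(2 * π * j / n)) - 1) := by
    have hexp : exp (I * ↑(2 * π * j / n)) = z / ζ := by
      rw [← hj, ← Complex.exp_nat_mul]; congr 1; push_cast; ring
    rw [hexp, mul_sub, mul_div_cancel₀ z hζ0, mul_one]
  calc 2 * Real.sin (π / n) ≤ 2 * Real.sin (π * j / n) := by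
        gcongr; exact sin_pi_div_le_sin_pi_mul_div hj0 hjn
    _ ≤ ‖2 * Real.sin (2 * π * j / n / 2)‖ := by
        rw [Real.norm_eq_abs, show 2 * π * j / n / 2 = π * j / n by ring]
        exact le_abs_self _
    _ = ‖z - ζ‖ := by
        rw [← norm_exp_I_mul_ofReal_sub_one, hsub, norm_mul,
          norm_eq_one_of_pow_eq_one hζ hn.ne', one_mul]

theorem muDensity_eq_logDeriv_sub (k : ℕ) {z : ℂ} (hz : z ≠ 0) (hz1 : z ^ (2 * k) ≠ 1) :
    (k : ℂ) / z * ((z ^ k + (z ^ k)⁻¹) / (z ^ k - (z ^ k)⁻¹)) =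
      deriv (fun z => z ^ (2 * k) - 1) z / (z ^ (2 * k) - 1) - k * z⁻¹ := by
  obtain ⟨m, rfl⟩ : ∃ m, k = m + 1 :=
    Nat.exists_eq_add_one.2 (Nat.pos_of_ne_zero (by rintro rfl; simp at hz1))
  have hw : z ^ (m + 1) ≠ 0 := pow_ne_zero _ hz
  have hw2 : (z ^ (m + 1)) ^ 2 - 1 ≠ 0 := by
    rw [← pow_mul, mul_comm]; exact sub_ne_zero.2 hz1
  rw [deriv_sub_const, deriv_pow_field, show 2 * (m + 1) - 1 = 2 * m + 1 by omega]
  field_simp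
  push_cast
  ring

theorem circleIntegral_muDensity_eq (k : ℕ) {c : ℂ} {R : ℝ} (hR : 0 < R)
    (h0 : (0 : ℂ) ∉ sphere c R) (h1 : ∀ z ∈ sphere c R, z ^ (2 * k) - 1 ≠ 0) :
    ∮ z in C(c, R), (k : ℂ) / z * ((z ^ k + (z ^ k)⁻¹) / (z ^ k - (z ^ k)⁻¹)) =
      (∮ z in C(c, R), deriv (fun z => z ^ (2 * k) - 1) z / (z ^ (2 * k) - 1)) -
        k * ∮ z in C(c, R), z⁻¹ := by
  have hp : Differentiable ℂ (fun z : ℂ => z ^ (2 * k) - 1) := by fun_prop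
  have hint₁ : CircleIntegrable
      (fun z => deriv (fun z => z ^ (2 * k) - 1) z / (z ^ (2 * k) - 1)) c R :=
    (hp.deriv.continuous.continuousOn.div (by fun_prop) h1).circleIntegrable hR.le
  have hint₂ : CircleIntegrable (fun z => (k : ℂ) * z⁻¹) c R :=
    ContinuousOn.circleIntegrable hR.le
      (continuousOn_const.mul (continuousOn_inv₀.mono fun z hz h => h0 (by rwa [← h])))
  rw [circleIntegral.integral_congr hR.le fun z hz =>
      muDensity_eq_logDeriv_sub k (ne_of_mem_of_not_mem hz h0) (sub_ne_zero.1 (h1 z hz)),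
    circleIntegral.integral_sub hint₁ hint₂, circleIntegral.integral_const_mul]

theorem circleIntegral_muDensity_of_pow_eq_one {k : ℕ} (hk : k ≠ 0) {ζ : ℂ}
    (hζ : ζ ^ (2 * k) = 1) {r : ℝ} (hr : 0 < r) (hr1 : r < 1)
    (hrζ : r < 2 * Real.sin (π / (2 * k))) :
    ∮ z in C(ζ, r), (k : ℂ) / z * ((z ^ k + (z ^ k)⁻¹) / (z ^ k - (z ^ k)⁻¹)) = 2 * π * I := by
  have hk2 : 2 * k ≠ 0 := by omega
  have hζ1 : ‖ζ‖ = 1 := norm_eq_one_of_pow_eq_one hζ hk2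
  have h0 : (0 : ℂ) ∉ closedBall ζ r := by
    rw [mem_closedBall, dist_comm, dist_zero_right, hζ1]; exact hr1.not_ge
  have hsimple : ∀ z ∈ closedBall ζ r, z ≠ ζ → z ^ (2 * k) - 1 ≠ 0 := fun z hz hne h => by
    have hsep := two_mul_sin_pi_div_le_norm_sub (sub_eq_zero.1 h) hζ hne
    rw [← dist_eq_norm, Nat.cast_mul, Nat.cast_two] at hsep
    linarith [mem_closedBall.1 hz]
  have hderiv : deriv (fun z : ℂ => z ^ (2 * k) - 1) ζ ≠ 0 := by
    rw [deriv_sub_const, deriv_pow_field]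
    exact mul_ne_zero (by exact_mod_cast hk2)
      (pow_ne_zero _ (norm_ne_zero_iff.1 (by simp [hζ1])))
  rw [circleIntegral_muDensity_eq k hr (fun h => h0 (sphere_subset_closedBall h))
      fun z hz => hsimple z (sphere_subset_closedBall hz) (ne_of_mem_sphere hz hr.ne'),
    circleIntegral_deriv_div_eq_two_pi_I (by fun_prop) hr (by simp [hζ]) hderiv hsimple,
    show ∮ z in C(ζ, r), z⁻¹ = 0 by simpa using circleIntegral_sub_inv_eq_zero hr.le h0,
    mul_zero, sub_zero]

theorem circleIntegral_muDensity_center_zero {k : ℕ} (hk : k ≠ 0) {r : ℝ} (hr : 0 < r)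
    (hr1 : r < 1) :
    ∮ z in C(0, r), (k : ℂ) / z * ((z ^ k + (z ^ k)⁻¹) / (z ^ k - (z ^ k)⁻¹)) =
      -(k * (2 * π * I)) := by
  have hno_root : ∀ z ∈ closedBall (0 : ℂ) r, z ^ (2 * k) - 1 ≠ 0 := fun z hz h => by
    have := norm_eq_one_of_pow_eq_one (sub_eq_zero.1 h) (by omega)
    linarith [mem_closedBall_zero_iff.1 hz]
  rw [circleIntegral_muDensity_eq k hr (by simpa using hr.ne) fun z hz =>
      hno_root z (sphere_subset_closedBall hz),
    circleIntegral_deriv_div_eq_zero (by fun_prop) hr.le hno_root,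
    show ∮ z in C(0, r), z⁻¹ = 2 * π * I by
      simpa using circleIntegral.integral_sub_center_inv 0 hr.ne',
    zero_sub]

theorem mu_k_residues (k : ℤ) (hk : 1 ≤ k) :
    (∀ ζ : ℂ, ζ ^ (2 * k) = 1 → ∀ r : ℝ, 0 < r → r < 1 →
      r < 2 * Real.sin (Real.pi / (2 * k)) →
      (2 * (Real.pi : ℂ) * Complex.I)⁻¹ *
        (∮ z in C(ζ, r), ((k : ℂ) / z) * ((z ^ k + z ^ (-k)) / (z ^ k - z ^ (-k)))) = 1) ∧
    (∀ r : ℝ, 0 < r → r < 1 →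
      (2 * (Real.pi : ℂ) * Complex.I)⁻¹ *
        (∮ z in C(0, r), ((k : ℂ) / z) * ((z ^ k + z ^ (-k)) / (z ^ k - z ^ (-k)))) =
        -(k : ℂ)) := by
  lift k to ℕ using by omega
  have hk0 : k ≠ 0 := by omega
  have h2πI : 2 * (π : ℂ) * I ≠ 0 := by simp [Real.pi_ne_zero, I_ne_zero]
  simp only [Int.cast_natCast, zpow_neg, zpow_natCast]
  refine ⟨fun ζ hζ r hr hr1 hrζ => ?_, fun r hr hr1 => ?_⟩
  · rw [circleIntegral_muDensity_of_pow_eq_one hk0 (by exact_mod_cast hζ) hr hr1 hrζ,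
      inv_mul_cancel₀ h2πI]
  · rw [circleIntegral_muDensity_center_zero hk0 hr hr1]
    field_simp
end
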